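/- arXiv:1803.04431 — 3 statements merged into one kernel-verified Lean document; each statement's English description precedes it below -/
import Mathlib

section
/- Let S be a symmetric n×n matrix and Z an n×q matrix with full column rank. The minimizers of the Frobenius-norm objective ‖Z Λ Zᵀ − S + σ² I‖_F² over symmetric q×q matrices Λ and scalars σ² are given by σ̂² = tr[S (I − Z Z†)] / (n − q) and Λ̂ = Z† S Z†ᵀ − σ̂² (ZᵀZ)^{-1}, where Z† = (ZᵀZ)^{-1} Zᵀ is the Moore–Penrose pseudoinverse of Z. -/
/-!
The objective is the squared Frobenius norm of `Z Λ Zᵀ − S + σ² I`, so it suffices to show that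
the residual `R₀ = Z Λ̂ Zᵀ − S + σ̂² I` is Frobenius-orthogonal to the subspace
`{Z X Zᵀ + c I}` of all possible perturbations: then Pythagoras gives the minimality.
Orthogonality to `Z X Zᵀ` amounts to `Zᵀ R₀ Z = 0`, which is where `Λ̂` comes from, and
orthogonality to `I` amounts to `tr R₀ = 0`, which is where `σ̂²` comes from.
-/

open Matrix

namespace Matrix

section Frobenius

variable {m n : Type*} [Fintype m] [Fintype n]

lemma trace_transpose_mul_comm {R : Type*} [CommSemiring R] (A B : Matrix m n R) :
    (Aᵀ * B).trace = (Bᵀ * A).trace := by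
  rw [← trace_transpose, transpose_mul, transpose_transpose]

lemma trace_transpose_mul_self_nonneg (A : Matrix m n ℝ) : 0 ≤ (Aᵀ * A).trace := by
  simpa only [conjTranspose_eq_transpose_of_trivial] using
    (posSemidef_conjTranspose_mul_self A).trace_nonneg

lemma trace_transpose_mul_self_add_of_orthogonal {A B : Matrix m n ℝ}
    (h : (Aᵀ * B).trace = 0) :
    ((A + B)ᵀ * (A + B)).trace = (Aᵀ * A).trace + (Bᵀ * B).trace := by
  have h' : (Bᵀ * A).trace = 0 := by rw [trace_transpose_mul_comm, h]
  simp only [transpose_add, Matrix.add_mul, Matrix.mul_add, trace_add, h, h']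
  ring

lemma trace_transpose_mul_self_le_of_orthogonal {A B : Matrix m n ℝ}
    (h : (Aᵀ * B).trace = 0) :
    (Aᵀ * A).trace ≤ ((A + B)ᵀ * (A + B)).trace := by
  rw [trace_transpose_mul_self_add_of_orthogonal h]
  linarith [trace_transpose_mul_self_nonneg B]

end Frobenius

variable {m k R : Type*} [Fintype m] [Fintype k] [CommRing R]

lemma trace_transpose_mul_mul_mul_transpose_add_smul_one_eq_zero [DecidableEq m] {M : Matrix m m R}
    (Z : Matrix m k R) (hZMZ : Zᵀ * M * Z = 0) (hM : M.trace = 0) (X : Matrix k k R) (c : R) :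
    (Mᵀ * (Z * X * Zᵀ + c • 1)).trace = 0 := by
  have hZMZ' : Zᵀ * Mᵀ * Z = 0 := by
    simpa only [transpose_mul, transpose_transpose, Matrix.mul_assoc, transpose_zero] using
      congrArg transpose hZMZ
  have hX : (Mᵀ * (Z * X * Zᵀ)).trace = (Zᵀ * Mᵀ * Z * X).trace := by
    rw [show Mᵀ * (Z * X * Zᵀ) = Mᵀ * Z * X * Zᵀ by simp only [Matrix.mul_assoc], trace_mul_comm]
    simp only [Matrix.mul_assoc]
  rw [Matrix.mul_add, trace_add, hX, hZMZ', Matrix.zero_mul, Matrix.mul_smul, Matrix.mul_one,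
    trace_smul, trace_transpose, hM]
  simp

variable [DecidableEq k] (Z : Matrix m k R)

lemma transpose_inv_transpose_mul_self_mul_transpose :
    ((Zᵀ * Z)⁻¹ * Zᵀ)ᵀ = Z * (Zᵀ * Z)⁻¹ := by
  rw [transpose_mul, transpose_transpose, transpose_nonsing_inv, transpose_mul,
    transpose_transpose]

variable {Z}

lemma transpose_mul_self_mul_inv_transpose_mul_self_mul_transpose (hZ : IsUnit (Zᵀ * Z).det) :
    Zᵀ * Z * ((Zᵀ * Z)⁻¹ * Zᵀ) = Zᵀ := by
  rw [← Matrix.mul_assoc, mul_nonsing_inv _ hZ, Matrix.one_mul]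

lemma inv_transpose_mul_self_mul_transpose_transpose_mul (hZ : IsUnit (Zᵀ * Z).det) :
    ((Zᵀ * Z)⁻¹ * Zᵀ)ᵀ * (Zᵀ * Z) = Z := by
  rw [transpose_inv_transpose_mul_self_mul_transpose, Matrix.mul_assoc, nonsing_inv_mul _ hZ,
    Matrix.mul_one]

end Matrix

section AVC

variable {m k R : Type*} [Fintype m] [Fintype k] [DecidableEq m] [DecidableEq k] [CommRing R]
  {Z : Matrix m k R}

noncomputable def avcLambda (Z : Matrix m k R) (S : Matrix m m R) (σ : R) : Matrix k k R :=
  (Zᵀ * Z)⁻¹ * Zᵀ * S * ((Zᵀ * Z)⁻¹ * Zᵀ)ᵀ - σ • (Zᵀ * Z)⁻¹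

noncomputable def avcResidual (Z : Matrix m k R) (S : Matrix m m R) (σ : R) : Matrix m m R :=
  Z * avcLambda Z S σ * Zᵀ - S + σ • 1

lemma transpose_mul_avcResidual_mul_eq_zero (hZ : IsUnit (Zᵀ * Z).det) (S : Matrix m m R)
    (σ : R) : Zᵀ * avcResidual Z S σ * Z = 0 := by
  rw [avcResidual, avcLambda]
  set Zd := (Zᵀ * Z)⁻¹ * Zᵀ
  have hmain : Zᵀ * (Z * (Zd * S * Zdᵀ) * Zᵀ) * Z = Zᵀ * S * Z := by
    calc Zᵀ * (Z * (Zd * S * Zdᵀ) * Zᵀ) * Z = (Zᵀ * Z * Zd) * S * (Zdᵀ * (Zᵀ * Z)) := by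
          simp only [Matrix.mul_assoc]
      _ = Zᵀ * S * Z := by
          rw [transpose_mul_self_mul_inv_transpose_mul_self_mul_transpose hZ,
            inv_transpose_mul_self_mul_transpose_transpose_mul hZ]
  have hinv : Zᵀ * (Z * (Zᵀ * Z)⁻¹ * Zᵀ) * Z = Zᵀ * Z := by
    calc Zᵀ * (Z * (Zᵀ * Z)⁻¹ * Zᵀ) * Z = Zᵀ * Z * (Zᵀ * Z)⁻¹ * (Zᵀ * Z) := by
          simp only [Matrix.mul_assoc]
      _ = Zᵀ * Z := by rw [mul_nonsing_inv _ hZ, Matrix.one_mul]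
  simp only [Matrix.mul_sub, Matrix.sub_mul, Matrix.mul_add,
    Matrix.add_mul, Matrix.mul_smul, Matrix.smul_mul, Matrix.mul_one, hmain, hinv]
  abel

lemma trace_avcResidual (hZ : IsUnit (Zᵀ * Z).det) (S : Matrix m m R) (σ : R) :
    (avcResidual Z S σ).trace =
      σ * (Fintype.card m - Fintype.card k) - (S * (1 - Z * ((Zᵀ * Z)⁻¹ * Zᵀ))).trace := by
  set Zd := (Zᵀ * Z)⁻¹ * Zᵀ
  have hfit : Zᵀ * Z * avcLambda Z S σ = Zᵀ * S * Zdᵀ - σ • 1 := by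
    rw [avcLambda, Matrix.mul_sub, Matrix.mul_smul, mul_nonsing_inv _ hZ,
      show Zᵀ * Z * (Zd * S * Zdᵀ) = Zᵀ * Z * Zd * S * Zdᵀ by simp only [Matrix.mul_assoc],
      transpose_mul_self_mul_inv_transpose_mul_self_mul_transpose hZ]
  have hcyc : (Zᵀ * S * Zdᵀ).trace = (S * (Z * Zd)).trace := by
    rw [trace_mul_cycle, trace_mul_comm, transpose_inv_transpose_mul_self_mul_transpose,
      Matrix.mul_assoc]
  rw [avcResidual, trace_add, trace_sub, trace_mul_comm, ← Matrix.mul_assoc, hfit, trace_sub,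
    hcyc, Matrix.mul_sub, trace_sub, Matrix.mul_one]
  simp only [trace_smul, trace_one, smul_eq_mul]
  ring

end AVC

theorem avc_closed_form_general {n q : ℕ} (hq : q < n)
    (S : Matrix (Fin n) (Fin n) ℝ)
    (Z : Matrix (Fin n) (Fin q) ℝ) (hZ : IsUnit (Zᵀ * Z).det) :
    let Zd : Matrix (Fin q) (Fin n) ℝ := (Zᵀ * Z)⁻¹ * Zᵀ
    let σ2 : ℝ := (S * ((1 : Matrix (Fin n) (Fin n) ℝ) - Z * Zd)).trace / ((n : ℝ) - q)
    let Λ0 : Matrix (Fin q) (Fin q) ℝ := Zd * S * Zdᵀ - σ2 • (Zᵀ * Z)⁻¹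
    ∀ (Λ : Matrix (Fin q) (Fin q) ℝ), Λ.IsSymm → ∀ s : ℝ,
      ((Z * Λ0 * Zᵀ - S + σ2 • (1 : Matrix (Fin n) (Fin n) ℝ))ᵀ *
          (Z * Λ0 * Zᵀ - S + σ2 • (1 : Matrix (Fin n) (Fin n) ℝ))).trace ≤
        ((Z * Λ * Zᵀ - S + s • (1 : Matrix (Fin n) (Fin n) ℝ))ᵀ *
          (Z * Λ * Zᵀ - S + s • (1 : Matrix (Fin n) (Fin n) ℝ))).trace := by
  intro Zd σ2 Λ0 Λ _ s
  have hnq : (n : ℝ) - q ≠ 0 := sub_ne_zero.mpr (by exact_mod_cast hq.ne')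
  have hZR : Zᵀ * avcResidual Z S σ2 * Z = 0 := transpose_mul_avcResidual_mul_eq_zero hZ S σ2
  have htrR : (avcResidual Z S σ2).trace = 0 := by
    rw [trace_avcResidual hZ S σ2, Fintype.card_fin, Fintype.card_fin, div_mul_cancel₀ _ hnq,
      sub_self]
  have hsplit : Z * Λ * Zᵀ - S + s • 1 =
      avcResidual Z S σ2 + (Z * (Λ - avcLambda Z S σ2) * Zᵀ + (s - σ2) • 1) := by
    simp only [avcResidual, Matrix.mul_sub, Matrix.sub_mul, sub_smul]
    abel
  rw [hsplit]
  exact trace_transpose_mul_self_le_of_orthogonal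
    (trace_transpose_mul_mul_mul_transpose_add_smul_one_eq_zero Z hZR htrR _ _)

/-- Closed-form approximate variance components: for symmetric `S` and `Z` of full
column rank (with `Z† = (ZᵀZ)⁻¹ Zᵀ`), the pair
`σ̂² = tr[S (I − Z Z†)]/(n − q)` and `Λ̂ = Z† S Z†ᵀ − σ̂² (ZᵀZ)⁻¹`
minimizes `‖Z Λ Zᵀ − S + σ² I‖_F²` over symmetric `Λ` and scalars `σ²`. -/
theorem avc_closed_form {n q : ℕ} (hq : q < n)
    (S : Matrix (Fin n) (Fin n) ℝ) (hS : S.IsSymm)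
    (Z : Matrix (Fin n) (Fin q) ℝ) (hZ : IsUnit (Zᵀ * Z).det) :
    let Zd : Matrix (Fin q) (Fin n) ℝ := (Zᵀ * Z)⁻¹ * Zᵀ
    let σ2 : ℝ := (S * ((1 : Matrix (Fin n) (Fin n) ℝ) - Z * Zd)).trace / ((n : ℝ) - q)
    let Λ0 : Matrix (Fin q) (Fin q) ℝ := Zd * S * Zdᵀ - σ2 • (Zᵀ * Z)⁻¹
    ∀ (Λ : Matrix (Fin q) (Fin q) ℝ), Λ.IsSymm → ∀ s : ℝ,
      ((Z * Λ0 * Zᵀ - S + σ2 • (1 : Matrix (Fin n) (Fin n) ℝ))ᵀ *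
          (Z * Λ0 * Zᵀ - S + σ2 • (1 : Matrix (Fin n) (Fin n) ℝ))).trace ≤
        ((Z * Λ * Zᵀ - S + s • (1 : Matrix (Fin n) (Fin n) ℝ))ᵀ *
          (Z * Λ * Zᵀ - S + s • (1 : Matrix (Fin n) (Fin n) ℝ))).trace :=
  avc_closed_form_general hq S Z hZ
end

section
/- Let S be a symmetric n×n matrix and G = Z D Zᵀ for a fixed symmetric positive semidefinite D, with G ≠ 0. Under the parameterization Λ = θD, the minimizer over θ of ‖θ G − S + σ² I‖_F² is θ* = tr(G(S − σ² I)) / tr(G²); substituting this and minimizing over σ² yields σ̂² = (1/(n − α)) [tr(S) − tr(GS)/tr(G²) · tr(G)] where α = tr(G)² / tr(G²), provided n ≠ α. -/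
/-! For symmetric `G` and `S`, the squared Frobenius norm `‖θ G − S + s I‖²` is the quadratic
`tr(G²) θ² − 2 tr(G(S − s I)) θ + (terms in s)`, whose leading coefficient is positive since
`G ≠ 0`; its vertex is `θ*(s)`. Substituting `θ*(s)` leaves a quadratic in `s` with leading
coefficient `n − α`, which is nonnegative by Cauchy–Schwarz (`tr(G)² ≤ n tr(G²)`), and `σ̂²`
is its vertex. -/

open Matrix

namespace Matrix

variable {ι : Type*} [Fintype ι]

theorem trace_mul_self_pos_of_isSymm {G : Matrix ι ι ℝ} (hG : G.IsSymm) (h : G ≠ 0) :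
    0 < (G * G).trace := by
  have hGG : G * G = Gᴴ * G := by rw [conjTranspose_eq_transpose_of_trivial, hG.eq]
  rw [hGG]
  exact (posSemidef_conjTranspose_mul_self G).trace_nonneg.lt_of_ne'
    (trace_conjTranspose_mul_self_eq_zero_iff.not.mpr h)

theorem sq_trace_le_card_mul_trace_transpose_mul_self (A : Matrix ι ι ℝ) :
    A.trace ^ 2 ≤ Fintype.card ι * (Aᵀ * A).trace := calc
  A.trace ^ 2 ≤ Fintype.card ι * ∑ i, A i i ^ 2 := sq_sum_le_card_mul_sum_sq
  _ ≤ Fintype.card ι * ∑ i, ∑ j, A j i ^ 2 := by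
    gcongr with i
    exact Finset.single_le_sum (f := fun j => A j i ^ 2) (fun j _ => sq_nonneg _)
      (Finset.mem_univ i)
  _ = Fintype.card ι * (Aᵀ * A).trace := by simp [trace, mul_apply, sq]

theorem trace_transpose_mul_self_smul_sub_add_smul_one [DecidableEq ι] {G S : Matrix ι ι ℝ}
    (hG : G.IsSymm) (hS : S.IsSymm) (θ s : ℝ) :
    ((θ • G - S + s • (1 : Matrix ι ι ℝ))ᵀ * (θ • G - S + s • (1 : Matrix ι ι ℝ))).trace =
      (G * G).trace * θ ^ 2 - 2 * ((G * S).trace - s * G.trace) * θ +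
        (Fintype.card ι * s ^ 2 - 2 * S.trace * s + (S * S).trace) := by
  rw [transpose_add, transpose_sub, transpose_smul, transpose_smul, transpose_one, hG.eq, hS.eq]
  simp only [Matrix.add_mul, Matrix.mul_add, Matrix.sub_mul, Matrix.mul_sub, Matrix.smul_mul,
    Matrix.mul_smul, Matrix.one_mul, Matrix.mul_one, trace_add, trace_sub, trace_smul, trace_one,
    smul_eq_mul, trace_mul_comm S G]
  ring

end Matrix

theorem quadratic_vertex_le {a b x₀ : ℝ} (ha : 0 ≤ a) (hx₀ : a * x₀ = b) (c x : ℝ) :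
    a * x₀ ^ 2 - 2 * b * x₀ + c ≤ a * x ^ 2 - 2 * b * x + c := by
  subst hx₀
  nlinarith [mul_nonneg ha (sq_nonneg (x - x₀))]

/-- Closed-form AVC estimator under the parameterization `Λ = θ D`:
`θ*(σ²) = tr(G(S − σ² I))/tr(G²)` minimizes `‖θ G − S + σ² I‖_F²` over `θ`, and
`σ̂² = (1/(n − α))[tr S − tr(GS)/tr(G²) · tr G]` with `α = tr(G)²/tr(G²)`
minimizes `σ² ↦ ‖θ*(σ²) G − S + σ² I‖_F²`. -/
theorem avc_theta_closed_form {n d : ℕ}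
    (S : Matrix (Fin n) (Fin n) ℝ) (hS : S.IsSymm)
    (D : Matrix (Fin d) (Fin d) ℝ) (hD : D.PosSemidef)
    (Z : Matrix (Fin n) (Fin d) ℝ)
    (hG : Z * D * Zᵀ ≠ 0)
    (hn : (n : ℝ) ≠
      (Z * D * Zᵀ).trace ^ 2 / ((Z * D * Zᵀ) * (Z * D * Zᵀ)).trace) :
    let G : Matrix (Fin n) (Fin n) ℝ := Z * D * Zᵀ
    let θstar : ℝ → ℝ := fun s =>
      (G * (S - s • (1 : Matrix (Fin n) (Fin n) ℝ))).trace / (G * G).trace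
    let α : ℝ := G.trace ^ 2 / (G * G).trace
    let σ2 : ℝ := (1 / ((n : ℝ) - α)) *
      (S.trace - (G * S).trace / (G * G).trace * G.trace)
    (∀ s θ : ℝ,
      ((θstar s • G - S + s • (1 : Matrix (Fin n) (Fin n) ℝ))ᵀ *
          (θstar s • G - S + s • (1 : Matrix (Fin n) (Fin n) ℝ))).trace ≤
        ((θ • G - S + s • (1 : Matrix (Fin n) (Fin n) ℝ))ᵀ *
          (θ • G - S + s • (1 : Matrix (Fin n) (Fin n) ℝ))).trace) ∧
    (∀ s : ℝ,
      ((θstar σ2 • G - S + σ2 • (1 : Matrix (Fin n) (Fin n) ℝ))ᵀ *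
          (θstar σ2 • G - S + σ2 • (1 : Matrix (Fin n) (Fin n) ℝ))).trace ≤
        ((θstar s • G - S + s • (1 : Matrix (Fin n) (Fin n) ℝ))ᵀ *
          (θstar s • G - S + s • (1 : Matrix (Fin n) (Fin n) ℝ))).trace) := by
  intro G θstar α σ2
  have hGsymm : G.IsSymm := by
    simpa using (hD.mul_mul_conjTranspose_same Z).isHermitian
  have hc : 0 < (G * G).trace := trace_mul_self_pos_of_isSymm hGsymm hG
  have hα : α < n := by
    have hcs := sq_trace_le_card_mul_trace_transpose_mul_self G
    rw [hGsymm.eq, Fintype.card_fin, ← div_le_iff₀ hc] at hcs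
    exact hcs.lt_of_ne hn.symm
  have hθstar : ∀ s, θstar s = ((G * S).trace - s * G.trace) / (G * G).trace := fun s => by
    simp only [θstar, Matrix.mul_sub, Matrix.mul_smul, Matrix.mul_one, trace_sub, trace_smul,
      smul_eq_mul]
  have hprofile : ∀ s, ((θstar s • G - S + s • (1 : Matrix (Fin n) (Fin n) ℝ))ᵀ *
      (θstar s • G - S + s • (1 : Matrix (Fin n) (Fin n) ℝ))).trace =
      (n - α) * s ^ 2 - 2 * (S.trace - (G * S).trace / (G * G).trace * G.trace) * s +
        ((S * S).trace - (G * S).trace ^ 2 / (G * G).trace) := fun s => by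
    rw [trace_transpose_mul_self_smul_sub_add_smul_one hGsymm hS, Fintype.card_fin, hθstar s]
    simp only [α]
    field_simp
    ring
  have hσ2 : (n - α) * σ2 = S.trace - (G * S).trace / (G * G).trace * G.trace := by
    simp only [σ2]
    field_simp [sub_ne_zero.mpr hα.ne']
  refine ⟨fun s θ => ?_, fun s => ?_⟩
  · simp only [trace_transpose_mul_self_smul_sub_add_smul_one hGsymm hS]
    exact quadratic_vertex_le hc.le (by rw [hθstar s, mul_div_cancel₀ _ hc.ne']) _ θ
  · simp only [hprofile]
    exact quadratic_vertex_le (sub_nonneg.mpr hα.le) hσ2 _ s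
end

section
/- Let A and B be symmetric positive semidefinite n×n matrices with (1−ε) A ⪯ B ⪯ (1+√(2/3) ε) A for some 0 ≤ ε < 1 (Loewner order), and let P be a symmetric idempotent projection matrix of rank n−q. Then |tr(P(B−A)P)| ≤ ε · tr(P A P) ≤ ε · Σ_{i=1}^{n−q} λ_i(A), where λ_1(A) ≥ λ_2(A) ≥ … are the eigenvalues of A in decreasing order, i.e., the bound is ε times the Ky Fan (n−q)-norm of A. -/
/-!
Congruence by `P` and the trace are monotone for the Loewner order, so the two-sided bound
`(1 - ε) A ⪯ B ⪯ (1 + ε) A` (which follows from the hypotheses as `√(2/3) ≤ 1`) passes to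
`tr(P B P)` versus `tr(P A P)`. For the Ky Fan bound, write `tr(P A P) = tr(A P) = ∑ λᵢ dᵢ`
with `dᵢ` the diagonal of `P` in an eigenbasis of `A`: since `0 ⪯ P ⪯ 1` the `dᵢ` lie in
`[0, 1]`, and they sum to `tr P = rank P`. Such a weighted sum of the `λᵢ` is at most the
sum of the `rank P` largest of them.
-/

open Matrix
open scoped MatrixOrder

theorem Finset.exists_card_eq_threshold {ι α : Type*} [Fintype ι] [DecidableEq ι] [LinearOrder α]
    [Nonempty α] (f : ι → α) {k : ℕ} (hk : k ≤ Fintype.card ι) :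
    ∃ T : Finset ι, ∃ m : α, T.card = k ∧ (∀ i ∈ T, m ≤ f i) ∧ ∀ i ∉ T, f i ≤ m := by
  induction k with
  | zero =>
    obtain ⟨m, hm⟩ := (Set.finite_range f).bddAbove
    exact ⟨∅, m, rfl, by simp, fun i _ => hm ⟨i, rfl⟩⟩
  | succ k ih =>
    obtain ⟨T, m, hcard, hge, hle⟩ := ih (by omega)
    have hne : Tᶜ.Nonempty := by
      rw [← Finset.card_pos, Finset.card_compl]
      omega
    obtain ⟨j, hjT, hjmax⟩ := Tᶜ.exists_max_image f hne
    rw [Finset.mem_compl] at hjT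
    refine ⟨insert j T, f j, by rw [Finset.card_insert_of_notMem hjT, hcard], ?_, ?_⟩
    · simp only [Finset.mem_insert, forall_eq_or_imp, le_refl, true_and]
      exact fun i hi => (hle j hjT).trans (hge i hi)
    · intro i hi
      exact hjmax i (Finset.mem_compl.mpr fun h => hi (Finset.mem_insert_of_mem h))

theorem Finset.exists_card_eq_sum_mul_le_sum {ι : Type*} [Fintype ι] [DecidableEq ι]
    (f d : ι → ℝ) {k : ℕ} (hd0 : ∀ i, 0 ≤ d i) (hd1 : ∀ i, d i ≤ 1) (hdk : ∑ i, d i = k) :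
    ∃ T : Finset ι, T.card = k ∧ ∑ i, f i * d i ≤ ∑ i ∈ T, f i := by
  have hk : k ≤ Fintype.card ι := by
    have : ∑ i, d i ≤ ∑ _i : ι, (1 : ℝ) := Finset.sum_le_sum fun i _ => hd1 i
    rw [hdk, Finset.sum_const, Finset.card_univ, nsmul_one] at this
    exact_mod_cast this
  obtain ⟨T, m, hcard, hge, hle⟩ := Finset.exists_card_eq_threshold f hk
  refine ⟨T, hcard, sub_nonneg.mp ?_⟩
  -- The `m`-terms cancel as `∑ d = #T`, and each summand is `≥ 0` since `m` separates `T`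
  -- from its complement.
  have hdecomp : ∑ i ∈ T, f i - ∑ i, f i * d i =
      ∑ i, ((if i ∈ T then 1 else 0) - d i) * (f i - m) := by
    simp only [sub_mul, mul_sub, Finset.sum_sub_distrib, ite_mul, one_mul, zero_mul,
      Finset.sum_ite_mem, Finset.univ_inter, Finset.sum_const, hcard, nsmul_eq_mul,
      mul_comm (d _)]
    rw [← Finset.mul_sum, hdk]
    ring
  rw [hdecomp]
  refine Finset.sum_nonneg fun i _ => ?_
  by_cases hi : i ∈ T
  · simpa [hi] using mul_nonneg (sub_nonneg.mpr (hd1 i)) (sub_nonneg.mpr (hge i hi))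
  · simpa [hi] using mul_nonpos_of_nonneg_of_nonpos (hd0 i) (sub_nonpos.mpr (hle i hi))

namespace Matrix

variable {ι : Type*}

theorem diag_le_diag_of_le {A B : Matrix ι ι ℝ} (h : A ≤ B) (i : ι) : A i i ≤ B i i := by
  simpa using (le_iff.mp h).diag_nonneg (i := i)

variable [Fintype ι]

theorem trace_le_trace_of_le {A B : Matrix ι ι ℝ} (h : A ≤ B) : A.trace ≤ B.trace :=
  Finset.sum_le_sum fun i _ => diag_le_diag_of_le h i

theorem abs_trace_conj_sub_le {A B : Matrix ι ι ℝ} {ε : ℝ} (hlo : (1 - ε) • A ≤ B)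
    (hhi : B ≤ (1 + ε) • A) (P : Matrix ι ι ℝ) :
    |(star P * (B - A) * P).trace| ≤ ε * (star P * A * P).trace := by
  have hlo' := trace_le_trace_of_le (star_left_conjugate_le_conjugate hlo P)
  have hhi' := trace_le_trace_of_le (star_left_conjugate_le_conjugate hhi P)
  simp only [mul_sub, sub_mul, smul_mul_assoc, mul_smul_comm, trace_sub, trace_smul,
    smul_eq_mul] at hlo' hhi' ⊢
  rw [abs_le]
  constructor <;> linarith

variable [DecidableEq ι]

theorem IsHermitian.trace_mul_eq_sum_eigenvalues_mul {A : Matrix ι ι ℝ} (hA : A.IsHermitian)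
    (M : Matrix ι ι ℝ) :
    (A * M).trace = ∑ i, hA.eigenvalues i *
      (star (hA.eigenvectorUnitary : Matrix ι ι ℝ) * M * hA.eigenvectorUnitary) i i := by
  conv_lhs => rw [hA.spectral_theorem, Unitary.conjStarAlgAut_apply]
  rw [mul_assoc, trace_mul_cycle]
  simp [trace, mul_apply, diagonal_apply, mul_comm]

theorem trace_eq_rank_of_isIdempotentElem {K : Type*} [Field K] {P : Matrix ι ι K}
    (hP : IsIdempotentElem P) : P.trace = P.rank := by
  have h : IsIdempotentElem (toLin' P) := hP.map (toLinAlgEquiv' (R := K))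
  rw [← trace_toLin'_eq, (LinearMap.IsIdempotentElem.isProj_range _ h).trace]
  rfl

theorem IsHermitian.exists_card_eq_trace_mul_le {A P : Matrix ι ι ℝ} (hA : A.IsHermitian)
    (hP : IsStarProjection P) :
    ∃ T : Finset ι, T.card = P.rank ∧ (A * P).trace ≤ ∑ i ∈ T, hA.eigenvalues i := by
  set U : Matrix ι ι ℝ := ↑hA.eigenvectorUnitary
  have hU : star U * U = 1 := Unitary.coe_star_mul_self _
  have hU' : U * star U = 1 := Unitary.coe_mul_star_self _
  have hconj_nonneg : 0 ≤ star U * P * U := star_left_conjugate_nonneg hP.nonneg U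
  have hconj_le_one : star U * P * U ≤ 1 := by
    simpa [hU] using star_left_conjugate_le_conjugate hP.le_one U
  have hsum : (star U * P * U).trace = P.rank := by
    rw [← trace_eq_rank_of_isIdempotentElem hP.isIdempotentElem, trace_mul_cycle, hU', one_mul]
  obtain ⟨T, hcard, hT⟩ := Finset.exists_card_eq_sum_mul_le_sum hA.eigenvalues _
    (fun i => by simpa using diag_le_diag_of_le hconj_nonneg i)
    (fun i => by simpa using diag_le_diag_of_le hconj_le_one i) hsum
  refine ⟨T, hcard, ?_⟩
  rw [hA.trace_mul_eq_sum_eigenvalues_mul]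
  exact hT

end Matrix

theorem avc_trace_bound_general {n q : ℕ} (ε : ℝ)
    (hε0 : 0 ≤ ε)
    (A B P : Matrix (Fin n) (Fin n) ℝ)
    (hA : A.PosSemidef)
    (hlo : (B - (1 - ε) • A).PosSemidef)
    (hhi : ((1 + Real.sqrt (2 / 3) * ε) • A - B).PosSemidef)
    (hP : P.IsSymm) (hidem : P * P = P) (hrank : P.rank = n - q) :
    |(P * (B - A) * P).trace| ≤ ε * (P * A * P).trace ∧
      ε * (P * A * P).trace ≤
        ε * ⨆ T : {T : Finset (Fin n) // T.card = n - q},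
          ∑ i ∈ T.1, hA.1.eigenvalues i := by
  have hPstar : star P = P := by
    rw [star_eq_conjTranspose, conjTranspose_eq_transpose_of_trivial, hP.eq]
  have hhi' : B ≤ (1 + ε) • A := by
    refine (le_iff.mpr hhi).trans (le_iff.mpr ?_)
    have hs : Real.sqrt (2 / 3) ≤ 1 := Real.sqrt_le_one.mpr (by norm_num)
    rw [← sub_smul, add_sub_add_left_eq_sub]
    exact hA.smul (by nlinarith)
  refine ⟨by simpa only [hPstar] using abs_trace_conj_sub_le hlo hhi' P, ?_⟩
  obtain ⟨T, hcard, hT⟩ := hA.1.exists_card_eq_trace_mul_le (P := P) ⟨hidem, hPstar⟩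
  have hPAP : (P * A * P).trace = (A * P).trace := by
    rw [trace_mul_cycle, hidem, trace_mul_comm]
  gcongr
  rw [hPAP]
  exact hT.trans (le_ciSup (f := fun T : {T : Finset (Fin n) // T.card = n - q} =>
    ∑ i ∈ T.1, hA.1.eigenvalues i) (Set.finite_range _).bddAbove ⟨T, hcard.trans hrank⟩)

/-- Key trace bound for the AVC noise-variance error: if `(1−ε) A ⪯ B ⪯ (1+√(2/3) ε) A`
and `P` is a symmetric idempotent projection of rank `n − q`, then
`|tr(P(B−A)P)| ≤ ε tr(PAP)` and `ε tr(PAP)` is at most `ε` times the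
Ky Fan `(n−q)`-norm of `A` (the largest sum of `n−q` eigenvalues of `A`). -/
theorem avc_trace_bound {n q : ℕ} (hq : q ≤ n) (ε : ℝ)
    (hε0 : 0 ≤ ε) (hε1 : ε < 1)
    (A B P : Matrix (Fin n) (Fin n) ℝ)
    (hA : A.PosSemidef) (hB : B.PosSemidef)
    (hlo : (B - (1 - ε) • A).PosSemidef)
    (hhi : ((1 + Real.sqrt (2 / 3) * ε) • A - B).PosSemidef)
    (hP : P.IsSymm) (hidem : P * P = P) (hrank : P.rank = n - q) :
    |(P * (B - A) * P).trace| ≤ ε * (P * A * P).trace ∧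
      ε * (P * A * P).trace ≤
        ε * ⨆ T : {T : Finset (Fin n) // T.card = n - q},
          ∑ i ∈ T.1, hA.1.eigenvalues i :=
  avc_trace_bound_general ε hε0 A B P hA hlo hhi hP hidem hrank
end
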